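/- arXiv:2603.23294 — 2 statements merged into one kernel-verified Lean document; each statement's English description precedes it below -/
import Mathlib

section
/- Let X be a real random variable with E[X²] < ∞ and let τ ∈ (0,1). Then the function Q_τ(m) = E[R_τ(X−m)] is differentiable on ℝ with derivative Q_τ'(m) = E[ψ_τ(X,m)]. -/
/-!
Differentiate under the integral sign. The loss `u ↦ R_τ(u)` is differentiable with derivative
`2(τ u⁺ - (1 - τ) u⁻)`, so `∂ₘ R_τ(x - m) = ψ_τ(x, m)`. For `τ ∈ [0, 1]` one has
`R_τ(u) ≤ u²` and `|ψ_τ(x, m')| ≤ 2|m' - x| ≤ 2(1 + |x - m|)` when `|m' - m| < 1`;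
both majorants are integrable because `X ∈ L²`.
-/

open MeasureTheory

noncomputable def Rloss (τ u : ℝ) : ℝ :=
  τ * (max u 0) ^ 2 + (1 - τ) * (max (-u) 0) ^ 2

noncomputable def psi (τ x m : ℝ) : ℝ :=
  if m ≤ x then 2 * τ * (m - x) else 2 * (1 - τ) * (m - x)

open Set

lemma hasDerivAt_max_zero_sq (u : ℝ) :
    HasDerivAt (fun v : ℝ => max v 0 ^ 2) (2 * max u 0) u := by
  rcases lt_trichotomy u 0 with hu | rfl | hu
  · rw [max_eq_right hu.le, mul_zero]
    refine (hasDerivAt_const u 0).congr_of_eventuallyEq ?_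
    filter_upwards [eventually_lt_nhds hu] with v hv
    simp [max_eq_right hv.le]
  · have hleft : HasDerivWithinAt (fun v : ℝ => max v 0 ^ 2) 0 (Iic 0) 0 :=
      (hasDerivWithinAt_const 0 _ 0).congr (fun v hv => by simp [max_eq_right hv.out]) (by simp)
    have hright : HasDerivWithinAt (fun v : ℝ => max v 0 ^ 2) 0 (Ici 0) 0 := by
      simpa using (hasDerivAt_pow 2 (0 : ℝ)).hasDerivWithinAt.congr
        (fun v hv => by simp [max_eq_left hv.out]) (by simp)
    simpa [Iic_union_Ici] using hleft.union hright
  · have hsq : HasDerivAt (fun v : ℝ => v ^ 2) (2 * u) u := by simpa using hasDerivAt_pow 2 u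
    rw [max_eq_left hu.le]
    refine hsq.congr_of_eventuallyEq ?_
    filter_upwards [eventually_gt_nhds hu] with v hv
    simp [max_eq_left hv.le]

lemma hasDerivAt_Rloss (τ u : ℝ) :
    HasDerivAt (Rloss τ) (2 * (τ * max u 0 - (1 - τ) * max (-u) 0)) u := by
  have hneg := (hasDerivAt_max_zero_sq (-u)).comp u (hasDerivAt_neg u)
  exact (((hasDerivAt_max_zero_sq u).const_mul τ).add (hneg.const_mul (1 - τ))).congr_deriv
    (by ring)

lemma continuous_Rloss (τ : ℝ) : Continuous (Rloss τ) :=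
  continuous_iff_continuousAt.2 fun u => (hasDerivAt_Rloss τ u).continuousAt

lemma psi_eq_neg_deriv_Rloss (τ x m : ℝ) :
    psi τ x m = -(2 * (τ * max (x - m) 0 - (1 - τ) * max (-(x - m)) 0)) := by
  unfold psi
  split_ifs
  · rw [max_eq_left (by linarith), max_eq_right (by linarith)]; ring
  · rw [max_eq_right (by linarith), max_eq_left (by linarith)]; ring

lemma hasDerivAt_Rloss_sub (τ x m : ℝ) :
    HasDerivAt (fun m : ℝ => Rloss τ (x - m)) (psi τ x m) m :=
  ((hasDerivAt_Rloss τ (x - m)).comp m ((hasDerivAt_id m).const_sub x)).congr_deriv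
    (by rw [psi_eq_neg_deriv_Rloss]; ring)

lemma measurable_psi (τ m : ℝ) : Measurable fun x => psi τ x m := by
  unfold psi
  exact Measurable.ite (measurableSet_le measurable_const measurable_id) (by fun_prop) (by fun_prop)

lemma abs_Rloss_le_sq {τ : ℝ} (hτ0 : 0 ≤ τ) (hτ1 : τ ≤ 1) (u : ℝ) : |Rloss τ u| ≤ u ^ 2 := by
  unfold Rloss
  rcases le_total u 0 with hu | hu
  · rw [max_eq_right hu, max_eq_left (neg_nonneg.2 hu), abs_of_nonneg (by positivity)]
    nlinarith [sq_nonneg u]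
  · rw [max_eq_left hu, max_eq_right (neg_nonpos.2 hu), abs_of_nonneg (by positivity)]
    nlinarith [sq_nonneg u]

lemma abs_psi_le {τ : ℝ} (hτ0 : 0 ≤ τ) (hτ1 : τ ≤ 1) (x m : ℝ) : |psi τ x m| ≤ 2 * |m - x| := by
  unfold psi
  split_ifs <;> rw [abs_mul, abs_of_nonneg (by linarith)] <;> gcongr <;> linarith

lemma integrable_Rloss_comp {Ω : Type*} [MeasurableSpace Ω] {μ : Measure Ω} {f : Ω → ℝ}
    (hf : MemLp f 2 μ) {τ : ℝ} (hτ0 : 0 ≤ τ) (hτ1 : τ ≤ 1) :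
    Integrable (fun ω => Rloss τ (f ω)) μ :=
  hf.integrable_sq.mono' ((continuous_Rloss τ).comp_aestronglyMeasurable hf.1)
    (ae_of_all _ fun ω => abs_Rloss_le_sq hτ0 hτ1 (f ω))

theorem stmt5 {Ω : Type*} [MeasurableSpace Ω] (μ : Measure Ω) [IsProbabilityMeasure μ]
    (X : Ω → ℝ) (hX : Measurable X) (hX2 : Integrable (fun ω => (X ω) ^ 2) μ)
    (τ : ℝ) (hτ : τ ∈ Set.Ioo (0:ℝ) 1) (m : ℝ) :
    HasDerivAt (fun m : ℝ => ∫ ω, Rloss τ (X ω - m) ∂μ)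
      (∫ ω, psi τ (X ω) m ∂μ) m := by
  obtain ⟨hτ0, hτ1⟩ := hτ
  have hXm : ∀ m' : ℝ, MemLp (fun ω => X ω - m') 2 μ := fun m' =>
    ((memLp_two_iff_integrable_sq hX.aestronglyMeasurable).2 hX2).sub (memLp_const m')
  refine (hasDerivAt_integral_of_dominated_loc_of_deriv_le (Metric.ball_mem_nhds m one_pos)
    (bound := fun ω => 2 * (1 + |X ω - m|))
    (Filter.Eventually.of_forall fun m' => (integrable_Rloss_comp (hXm m') hτ0.le hτ1.le).1)
    (integrable_Rloss_comp (hXm m) hτ0.le hτ1.le)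
    ((measurable_psi τ m).comp hX).aestronglyMeasurable ?_
    (((integrable_const 1).add ((hXm m).integrable one_le_two).abs).const_mul 2)
    (ae_of_all _ fun ω m' _ => hasDerivAt_Rloss_sub τ (X ω) m')).2
  refine ae_of_all _ fun ω m' hm' => (abs_psi_le hτ0.le hτ1.le _ _).trans ?_
  have htri := abs_sub_le m' m (X ω)
  rw [Metric.mem_ball, Real.dist_eq] at hm'
  rw [abs_sub_comm m (X ω)] at htri
  linarith
end

section
/- Let X be a square-integrable real random variable, 𝒢₁ ⊆ 𝒢₂ two σ-fields, and τ ∈ (0,1). Then E[R_τ(X − μ_τ(X | 𝒢₂))] ≤ E[R_τ(X − μ_τ(X | 𝒢₁))]; consequently the Granger causality measure GC_τ = log( E[R_τ(X − μ_τ(X|𝒢₁))] / E[R_τ(X − μ_τ(X|𝒢₂))] ) is nonnegative whenever both expectations are strictly positive. -/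
open MeasureTheory

/-- `g` is a conditional τ-expectile of `S` given the σ-field `G`:
it is `G`-measurable and minimizes the expected asymmetric quadratic loss
among `G`-measurable candidates (with integrable loss). -/
def IsCondExpectile {Ω : Type*} [MeasurableSpace Ω] (μ : Measure Ω) (τ : ℝ)
    (G : MeasurableSpace Ω) (S g : Ω → ℝ) : Prop :=
  Measurable[G] g ∧ Integrable (fun ω => Rloss τ (S ω - g ω)) μ ∧
    ∀ m : Ω → ℝ, Measurable[G] m → Integrable (fun ω => Rloss τ (S ω - m ω)) μ →
      ∫ ω, Rloss τ (S ω - g ω) ∂μ ≤ ∫ ω, Rloss τ (S ω - m ω) ∂μ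

theorem stmt19 {Ω : Type*} [m0 : MeasurableSpace Ω] (μ : Measure Ω) [IsProbabilityMeasure μ]
    (X : Ω → ℝ) (hX : Measurable X) (hX2 : Integrable (fun ω => (X ω) ^ 2) μ)
    (τ : ℝ) (hτ : τ ∈ Set.Ioo (0:ℝ) 1)
    (G₁ G₂ : MeasurableSpace Ω) (h12 : G₁ ≤ G₂) (h2 : G₂ ≤ m0)
    (g₁ g₂ : Ω → ℝ)
    (hg₁ : @IsCondExpectile Ω m0 μ τ G₁ X g₁) (hg₂ : @IsCondExpectile Ω m0 μ τ G₂ X g₂) :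
    (∫ ω, Rloss τ (X ω - g₂ ω) ∂μ ≤ ∫ ω, Rloss τ (X ω - g₁ ω) ∂μ) ∧
    (0 < ∫ ω, Rloss τ (X ω - g₁ ω) ∂μ → 0 < ∫ ω, Rloss τ (X ω - g₂ ω) ∂μ →
      0 ≤ Real.log ((∫ ω, Rloss τ (X ω - g₁ ω) ∂μ) / ∫ ω, Rloss τ (X ω - g₂ ω) ∂μ)) := by
  obtain ⟨hm₁, hi₁, _⟩ := hg₁
  obtain ⟨hm₂, hi₂, hmin₂⟩ := hg₂
  have key : ∫ ω, Rloss τ (X ω - g₂ ω) ∂μ ≤ ∫ ω, Rloss τ (X ω - g₁ ω) ∂μ :=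
    hmin₂ g₁ (hm₁.mono h12 le_rfl) hi₁
  refine ⟨key, fun h1 h2' => Real.log_nonneg ((one_le_div h2').mpr key)⟩
end
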